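/- (Continuity of the countable union in the completion.) For each i ≥ 1 let S_i ∈ S̃. Then lim_{n→∞} μ*( (⋃_{i=1}^∞ S_i) ∩ (⋃_{i=1}^n S_i)ᶜ ) = 0, i.e., the finite unions ⋃_{i=1}^n S_i converge to ⋃_{i=1}^∞ S_i in the pseudometric d(A,B) = μ*(A △ B). -/

import Mathlib

/-!
Approximate each `Sᵢ` by `Bᵢ ∈ Ω` with `μ*(Sᵢ ∆ Bᵢ) < δᵢ`, where `∑ δᵢ < ε / 2`. A point of
`⋃ Sᵢ` that lies in none of `S₀, …, Sₙ` is either in some `Sᵢ ∆ Bᵢ` or in `⋃ Bᵢ` but in none of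
`B₀, …, Bₙ`. The second set is covered by the tail `k > n` of the disjointed sequence
`Dₖ = Bₖ \ ⋃_{i<k} Bᵢ` in `Ω`, and `∑ μ(Dₖ) ≤ μ(X) < ∞` by finite additivity, so its outer measure
tends to `0`. Identifying `μ*` with Mathlib's `inducedOuterMeasure` supplies its monotonicity
and countable subadditivity.
-/

open Filter Set Topology
open scoped symmDiff ENNReal

/-- `Ω` is an algebra of sets on `X`: it contains `∅` and is closed under
complements and finite unions. -/
def IsSetAlgebraOn {X : Type*} (Ω : Set (Set X)) : Prop :=
  ∅ ∈ Ω ∧ (∀ A ∈ Ω, Aᶜ ∈ Ω) ∧ (∀ A ∈ Ω, ∀ B ∈ Ω, A ∪ B ∈ Ω)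

/-- `μ` is a countably additive measure on the algebra `Ω`. -/
def IsCountablyAdditiveOn {X : Type*} (Ω : Set (Set X)) (μ : Set X → ℝ≥0∞) : Prop :=
  μ ∅ = 0 ∧ ∀ A : ℕ → Set X, (∀ i, A i ∈ Ω) → Pairwise (Function.onFun Disjoint A) →
    (⋃ i, A i) ∈ Ω → μ (⋃ i, A i) = ∑' i, μ (A i)

/-- The outer measure induced by `μ`:
`μ*(A) = inf { ∑ μ(Cᵢ) : A ⊆ ⋃ᵢ Cᵢ, Cᵢ ∈ Ω }`. -/
noncomputable def muStar {X : Type*} (Ω : Set (Set X)) (μ : Set X → ℝ≥0∞)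
    (A : Set X) : ℝ≥0∞ :=
  ⨅ (C : ℕ → Set X) (_ : ∀ i, C i ∈ Ω) (_ : A ⊆ ⋃ i, C i), ∑' i, μ (C i)

/-- A `μ`-Cauchy sequence in `Ω`: a sequence of members of `Ω` with
`μ(B n ∆ B m) → 0` as `n, m → ∞`. -/
def MuCauchy {X : Type*} (Ω : Set (Set X)) (μ : Set X → ℝ≥0∞) (B : ℕ → Set X) : Prop :=
  (∀ n, B n ∈ Ω) ∧ Tendsto (fun p : ℕ × ℕ => μ (B p.1 ∆ B p.2)) atTop (𝓝 0)

/-- `S̃`: the collection of subsets of `X` that are limits (in the pseudometric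
`d(A,B) = μ*(A ∆ B)`) of `μ`-Cauchy sequences from `Ω`. -/
def Stilde {X : Type*} (Ω : Set (Set X)) (μ : Set X → ℝ≥0∞) : Set (Set X) :=
  {S | ∃ B : ℕ → Set X, MuCauchy Ω μ B ∧
    Tendsto (fun n => muStar Ω μ (B n ∆ S)) atTop (𝓝 0)}

open MeasureTheory

theorem iUnion_diff_accumulate_subset_iUnion_disjointed {α : Type*} (B : ℕ → Set α) (n : ℕ) :
    (⋃ i, B i) \ accumulate B n ⊆ ⋃ k, disjointed B (k + (n + 1)) := by
  rintro x ⟨hx, hxn⟩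
  obtain ⟨i, hi⟩ := mem_iUnion.1 (iUnion_disjointed (f := B) ▸ hx)
  have hni : n < i := lt_of_not_ge fun hin =>
    hxn (mem_accumulate.2 ⟨i, hin, disjointed_subset B i hi⟩)
  exact mem_iUnion.2 ⟨i - (n + 1), by rwa [Nat.sub_add_cancel hni]⟩

theorem iUnion_diff_accumulate_subset {α : Type*} (S B : ℕ → Set α) (n : ℕ) :
    (⋃ i, S i) \ accumulate S n ⊆ ((⋃ i, B i) \ accumulate B n) ∪ ⋃ i, S i ∆ B i := by
  rintro x ⟨hx, hxn⟩
  obtain ⟨k, hk⟩ := mem_iUnion.1 hx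
  by_cases hkB : x ∈ B k
  · by_cases hxB : x ∈ accumulate B n
    · obtain ⟨i, hi, hxi⟩ := mem_accumulate.1 hxB
      have hxS : x ∉ S i := fun h => hxn (mem_accumulate.2 ⟨i, hi, h⟩)
      exact Or.inr (mem_iUnion.2 ⟨i, Or.inr ⟨hxi, hxS⟩⟩)
    · exact Or.inl ⟨mem_iUnion.2 ⟨k, hkB⟩, hxB⟩
  · exact Or.inr (mem_iUnion.2 ⟨k, Or.inl ⟨hk, hkB⟩⟩)

section AddContent

variable {α : Type*} {C : Set (Set α)}

theorem tsum_addContent_le_of_subset (hC : IsSetRing C) (m : AddContent ℝ≥0∞ C)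
    {f : ℕ → Set α} (hf : ∀ i, f i ∈ C) (hd : Pairwise (Function.onFun Disjoint f))
    {t : Set α} (ht : t ∈ C) (hft : ∀ i, f i ⊆ t) :
    ∑' i, m (f i) ≤ m t := by
  refine ENNReal.tsum_le_of_sum_range_le fun n => ?_
  rw [← addContent_biUnion_eq hC (fun i _ => hf i) (hd.set_pairwise _)]
  exact addContent_mono hC.isSetSemiring (hC.biUnion_mem _ fun i _ => hf i) ht
    (iUnion₂_subset fun i _ => hft i)

theorem tendsto_outerMeasure_iUnion_diff_accumulate (hC : IsSetRing C)
    (m : AddContent ℝ≥0∞ C) (huniv : univ ∈ C) (hfin : m univ ≠ ∞) (ν : OuterMeasure α)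
    (hν : ∀ s ∈ C, ν s ≤ m s) {B : ℕ → Set α} (hB : ∀ i, B i ∈ C) :
    Tendsto (fun n => ν ((⋃ i, B i) \ accumulate B n)) atTop (𝓝 0) := by
  have hsum : ∑' i, m (disjointed B i) ≠ ∞ := ne_top_of_le_ne_top hfin <|
    tsum_addContent_le_of_subset hC m (hC.disjointed_mem hB) (disjoint_disjointed B) huniv
      fun _ => subset_univ _
  refine tendsto_of_tendsto_of_tendsto_of_le_of_le tendsto_const_nhds
    ((ENNReal.tendsto_sum_nat_add _ hsum).comp (tendsto_add_atTop_nat 1))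
    (fun _ => zero_le) fun n => ?_
  calc ν ((⋃ i, B i) \ accumulate B n)
      ≤ ν (⋃ k, disjointed B (k + (n + 1))) :=
        measure_mono (iUnion_diff_accumulate_subset_iUnion_disjointed B n)
    _ ≤ ∑' k, ν (disjointed B (k + (n + 1))) := measure_iUnion_le _
    _ ≤ ∑' k, m (disjointed B (k + (n + 1))) :=
        ENNReal.tsum_le_tsum fun k => hν _ (hC.disjointed_mem hB _)

end AddContent

section SetAlgebra

variable {X : Type*} {Ω : Set (Set X)} {μ : Set X → ℝ≥0∞}

theorem IsSetAlgebraOn.isSetAlgebra (hΩ : IsSetAlgebraOn Ω) : IsSetAlgebra Ω :=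
  ⟨hΩ.1, fun s hs => hΩ.2.1 s hs, fun s t hs ht => hΩ.2.2 s hs t ht⟩

namespace IsCountablyAdditiveOn

theorem iUnion_eq_tsum (hμ : IsCountablyAdditiveOn Ω μ) (h0 : ∅ ∈ Ω) {β : Type*}
    [Countable β] {f : β → Set X} (hf : ∀ b, f b ∈ Ω)
    (hd : Pairwise (Function.onFun Disjoint f)) (hU : (⋃ b, f b) ∈ Ω) :
    μ (⋃ b, f b) = ∑' b, μ (f b) := by
  cases nonempty_encodable β
  rw [← Encodable.iUnion_decode₂, ← tsum_iUnion_decode₂ μ hμ.1]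
  exact hμ.2 _ (fun _ => Encodable.iUnion_decode₂_cases h0 hf)
    (Encodable.iUnion_decode₂_disjoint_on hd) (by rwa [Encodable.iUnion_decode₂])

theorem union_eq (hμ : IsCountablyAdditiveOn Ω μ) (h0 : ∅ ∈ Ω) {s t : Set X} (hs : s ∈ Ω)
    (ht : t ∈ Ω) (hst : s ∪ t ∈ Ω) (hd : Disjoint s t) : μ (s ∪ t) = μ s + μ t := by
  rw [union_eq_iUnion, hμ.iUnion_eq_tsum h0 (Bool.forall_bool.2 ⟨ht, hs⟩)
    (pairwise_disjoint_on_bool.2 hd) (by rwa [← union_eq_iUnion]), tsum_fintype]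
  simp

noncomputable def toAddContent (hμ : IsCountablyAdditiveOn Ω μ) (hΩ : IsSetAlgebraOn Ω) :
    AddContent ℝ≥0∞ Ω :=
  hΩ.isSetAlgebra.isSetRing.addContent_of_union μ hμ.1 fun hs ht hd =>
    hμ.union_eq hΩ.1 hs ht (hΩ.isSetAlgebra.union_mem hs ht) hd

end IsCountablyAdditiveOn

theorem muStar_eq_inducedOuterMeasure (h0 : ∅ ∈ Ω) (hμ0 : μ ∅ = 0) :
    muStar Ω μ = inducedOuterMeasure (fun s (_ : s ∈ Ω) => μ s) h0 hμ0 := by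
  ext A
  rw [inducedOuterMeasure, OuterMeasure.ofFunction_apply, muStar]
  refine iInf_congr fun C => ?_
  rw [iInf_comm]
  refine iInf_congr fun _ => ?_
  by_cases! hC : ∀ i, C i ∈ Ω
  · simp [hC, extend_eq]
  · obtain ⟨i, hi⟩ := hC
    rw [iInf_neg (by simpa using ⟨i, hi⟩)]
    exact (ENNReal.tsum_eq_top_of_eq_top ⟨i, extend_eq_top (P := (· ∈ Ω)) _ hi⟩).symm

theorem exists_mem_muStar_symmDiff_lt {S : Set X} (hS : S ∈ Stilde Ω μ) {ε : ℝ≥0∞}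
    (hε : 0 < ε) : ∃ B ∈ Ω, muStar Ω μ (S ∆ B) < ε := by
  obtain ⟨B, hB, hlim⟩ := hS
  obtain ⟨n, hn⟩ := (hlim.eventually (gt_mem_nhds hε)).exists
  exact ⟨B n, hB.1 n, by rwa [symmDiff_comm]⟩

end SetAlgebra

/-- continuity of the countable union in the completion. -/
theorem stmt10 {X : Type*} (Ω : Set (Set X)) (μ : Set X → ℝ≥0∞)
    (hΩ : IsSetAlgebraOn Ω) (hμ : IsCountablyAdditiveOn Ω μ) (hfin : μ Set.univ ≠ ⊤)
    (S : ℕ → Set X) (hS : ∀ i, S i ∈ Stilde Ω μ) :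
    Tendsto (fun n => muStar Ω μ ((⋃ i, S i) ∩ (⋃ i, ⋃ (_ : i ≤ n), S i)ᶜ))
      atTop (𝓝 0) := by
  set ν := inducedOuterMeasure (fun s (_ : s ∈ Ω) => μ s) hΩ.1 hμ.1
  have hν : muStar Ω μ = ν := muStar_eq_inducedOuterMeasure hΩ.1 hμ.1
  have hνμ : ∀ s ∈ Ω, ν s ≤ μ s := fun s hs =>
    (OuterMeasure.ofFunction_le s).trans_eq (extend_eq _ hs)
  refine ENNReal.tendsto_atTop_zero.2 fun ε hε => ?_
  have hε2 : 0 < ε / 2 := ENNReal.half_pos hε.ne'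
  obtain ⟨δ, hδ, hδsum⟩ := ENNReal.exists_pos_sum_of_countable' hε2.ne' ℕ
  choose B hBΩ hSB using fun i => exists_mem_muStar_symmDiff_lt (hS i) (hδ i)
  have hsymm : ν (⋃ i, S i ∆ B i) ≤ ε / 2 :=
    calc ν (⋃ i, S i ∆ B i) ≤ ∑' i, ν (S i ∆ B i) := measure_iUnion_le _
      _ ≤ ∑' i, δ i := ENNReal.tsum_le_tsum fun i => (hν ▸ hSB i).le
      _ ≤ ε / 2 := hδsum.le
  obtain ⟨N, hN⟩ := ENNReal.tendsto_atTop_zero.1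
    (tendsto_outerMeasure_iUnion_diff_accumulate hΩ.isSetAlgebra.isSetRing
      (hμ.toAddContent hΩ) hΩ.isSetAlgebra.univ_mem hfin ν hνμ hBΩ) (ε / 2) hε2
  refine ⟨N, fun n hn => ?_⟩
  rw [hν]
  calc ν ((⋃ i, S i) \ accumulate S n)
      ≤ ν (((⋃ i, B i) \ accumulate B n) ∪ ⋃ i, S i ∆ B i) :=
        measure_mono (iUnion_diff_accumulate_subset S B n)
    _ ≤ ε / 2 + ε / 2 := (measure_union_le _ _).trans (add_le_add (hN n hn) hsymm)
    _ = ε := ENNReal.add_halves ε
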